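/- arXiv:2102.07742 — 2 statements merged into one kernel-verified Lean document; each statement's English description precedes it below -/
import Mathlib

section
/- Let f(θ₂|θ₁) be a strictly positive conditional density on [a,b]×[c,d] such that for all θ₁' > θ₁ the likelihood ratio f(θ₂|θ₁')/f(θ₂|θ₁) is strictly increasing in θ₂ (strict MLRP), and let f₁ be a strictly positive marginal density for θ₁. Then for any k strictly between a and b, the likelihood ratio f(θ₂ | θ₁ ≥ k)/f(θ₂ | θ₁ < k) of the two conditional (truncated-mixture) densities is strictly increasing in θ₂. -/
open MeasureTheory intervalIntegral

/-- Strict MLRP of the conditional density is inherited by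
truncated mixtures: if `f θ₁ θ₂` is a strictly positive conditional density on
`[a,b] × [c,d]` with strict MLRP, and `f₁` is a strictly positive marginal
density on `[a,b]`, then for any `k ∈ (a,b)` the likelihood ratio of
`f(θ₂ | θ₁ ≥ k)` over `f(θ₂ | θ₁ < k)` is strictly increasing in `θ₂`. -/
theorem mixture_strict_mlrp
    (a b c d : ℝ) (hab : a < b) (hcd : c < d)
    (f : ℝ → ℝ → ℝ) (f₁ : ℝ → ℝ)
    (hfpos : ∀ θ₁ ∈ Set.Icc a b, ∀ θ₂ ∈ Set.Icc c d, 0 < f θ₁ θ₂)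
    (hf₁pos : ∀ θ₁ ∈ Set.Icc a b, 0 < f₁ θ₁)
    (hcont : Continuous fun p : ℝ × ℝ => f p.1 p.2) (hcont₁ : Continuous f₁)
    (hMLRP : ∀ θ₁ ∈ Set.Icc a b, ∀ θ₁' ∈ Set.Icc a b, ∀ θ₂ ∈ Set.Icc c d,
      ∀ θ₂' ∈ Set.Icc c d, θ₁ < θ₁' → θ₂ < θ₂' →
        f θ₁' θ₂ * f θ₁ θ₂' < f θ₁ θ₂ * f θ₁' θ₂')
    (k : ℝ) (hk : k ∈ Set.Ioo a b) :
    ∀ θ₂ ∈ Set.Icc c d, ∀ θ₂' ∈ Set.Icc c d, θ₂ < θ₂' →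
      (∫ s in k..b, f s θ₂ * f₁ s) * (∫ s in a..k, f s θ₂' * f₁ s) <
        (∫ s in a..k, f s θ₂ * f₁ s) * (∫ s in k..b, f s θ₂' * f₁ s) := by
  intro θ₂ hθ₂ θ₂' hθ₂' hlt
  obtain ⟨hak, hkb⟩ := hk
  have hkmem : k ∈ Set.Icc a b := ⟨hak.le, hkb.le⟩
  have hsub1 : Set.Icc a k ⊆ Set.Icc a b := Set.Icc_subset_Icc le_rfl hkb.le
  have hsub2 : Set.Icc k b ⊆ Set.Icc a b := Set.Icc_subset_Icc hak.le le_rfl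
  -- continuity of the integrands
  have hc : ∀ t : ℝ, Continuous fun s => f s t * f₁ s := fun t =>
    (hcont.comp (continuous_id.prodMk continuous_const)).mul hcont₁
  set A := ∫ s in a..k, f s θ₂ * f₁ s with hA
  set A' := ∫ s in a..k, f s θ₂' * f₁ s with hA'
  set B := ∫ s in k..b, f s θ₂ * f₁ s with hB
  set B' := ∫ s in k..b, f s θ₂' * f₁ s with hB'
  set p := f k θ₂ with hp
  set q := f k θ₂' with hq
  have hppos : 0 < p := hfpos k hkmem θ₂ hθ₂
  have hqpos : 0 < q := hfpos k hkmem θ₂' hθ₂'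
  have hposint : ∀ t ∈ Set.Icc c d, ∀ x y : ℝ, x ∈ Set.Icc a b → y ∈ Set.Icc a b →
      x < y → 0 < ∫ s in x..y, f s t * f₁ s := by
    intro t ht x y hx hy hxy
    apply intervalIntegral_pos_of_pos_on ((hc t).intervalIntegrable x y)
    · intro s hs
      have hsmem : s ∈ Set.Icc a b := ⟨hx.1.trans hs.1.le, hs.2.le.trans hy.2⟩
      exact mul_pos (hfpos s hsmem t ht) (hf₁pos s hsmem)
    · exact hxy
  have hA'pos : 0 < A' := hposint θ₂' hθ₂' a k ⟨le_rfl, hab.le⟩ hkmem hak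
  have hB'pos : 0 < B' := hposint θ₂' hθ₂' k b hkmem ⟨hab.le, le_rfl⟩ hkb
  -- key inequality 1 : B * q < p * B'
  have h1 : B * q < p * B' := by
    have : (∫ s in k..b, (f s θ₂ * f₁ s) * q) < ∫ s in k..b, p * (f s θ₂' * f₁ s) := by
      apply integral_lt_integral_of_continuousOn_of_le_of_exists_lt hkb
        (((hc θ₂).mul continuous_const).continuousOn)
        ((continuous_const.mul (hc θ₂')).continuousOn)
      · intro s hs
        have hsmem : s ∈ Set.Icc a b := ⟨hak.le.trans hs.1.le, hs.2⟩
        have := hMLRP k hkmem s hsmem θ₂ hθ₂ θ₂' hθ₂' hs.1 hlt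
        have hf1 := (hf₁pos s hsmem).le
        simp only [Pi.mul_apply]
        nlinarith [hf₁pos s hsmem]
      · refine ⟨b, ⟨hkb.le, le_rfl⟩, ?_⟩
        have hbmem : b ∈ Set.Icc a b := ⟨hab.le, le_rfl⟩
        have := hMLRP k hkmem b hbmem θ₂ hθ₂ θ₂' hθ₂' hkb hlt
        have := hf₁pos b hbmem
        simp only [Pi.mul_apply]
        nlinarith
    rwa [intervalIntegral.integral_mul_const, intervalIntegral.integral_const_mul] at this
  -- key inequality 2 : p * A' < A * q
  have h2 : p * A' < A * q := by
    have : (∫ s in a..k, p * (f s θ₂' * f₁ s)) < ∫ s in a..k, (f s θ₂ * f₁ s) * q := by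
      apply integral_lt_integral_of_continuousOn_of_le_of_exists_lt hak
        ((continuous_const.mul (hc θ₂')).continuousOn)
        (((hc θ₂).mul continuous_const).continuousOn)
      · intro s hs
        have hsmem : s ∈ Set.Icc a b := ⟨hs.1.le, hs.2.trans hkb.le⟩
        rcases lt_or_eq_of_le hs.2 with h | h
        · have := hMLRP s hsmem k hkmem θ₂ hθ₂ θ₂' hθ₂' h hlt
          simp only [Pi.mul_apply]
          nlinarith [hf₁pos s hsmem]
        · subst h; simp only [Pi.mul_apply]; exact le_of_eq (by ring)
      · refine ⟨a, ⟨le_rfl, hak.le⟩, ?_⟩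
        have hamem : a ∈ Set.Icc a b := ⟨le_rfl, hab.le⟩
        have := hMLRP a hamem k hkmem θ₂ hθ₂ θ₂' hθ₂' hak hlt
        have := hf₁pos a hamem
        simp only [Pi.mul_apply]
        nlinarith
    rwa [intervalIntegral.integral_mul_const, intervalIntegral.integral_const_mul] at this
  -- combine
  have : B * A' * q < A * B' * q := by nlinarith
  exact lt_of_mul_lt_mul_right this hqpos.le
end

section
/- Let U: [a,b] → ℝ be defined by U(θ_t) = δ · E[ max( θ_{t+1} − p + A(θ_{t+1}), R(θ_{t+1}) ) | θ_t ] where A and R are 1-Lipschitz nondecreasing functions, p is a constant, δ ∈ (0,1], θ_{t+1} = α θ_t + ε with α ∈ (0, 1/(2δ)) and ε independent with distribution supported on a bounded interval. Then U is nondecreasing and 1-Lipschitz: for θ' > θ, 0 ≤ U(θ') − U(θ) ≤ 2δα(θ' − θ) < θ' − θ. -/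
open MeasureTheory

/-- Inductive step of the multi-period threshold lemma:
with `θ_{t+1} = α θ_t + ε`, `α ∈ (0, 1/(2δ))`, `ε` bounded, and 1-Lipschitz
nondecreasing continuation values `A, R`, the function
`U θ = δ · E[max (θ_{t+1} - p + A θ_{t+1}) (R θ_{t+1}) | θ_t = θ]`
is nondecreasing and 1-Lipschitz: `0 ≤ U θ' - U θ ≤ 2δα (θ' - θ) < θ' - θ`
for `θ < θ'` in `[a,b]`. -/
theorem continuation_value_lipschitz_step
    {Ω : Type*} [MeasurableSpace Ω] (ℙ : Measure Ω) [IsProbabilityMeasure ℙ]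
    (a b p δ α : ℝ) (hδ : δ ∈ Set.Ioc (0:ℝ) 1) (hα : 0 < α) (hα' : α < 1 / (2 * δ))
    (ε : Ω → ℝ) (hεmeas : Measurable ε) (hεbdd : ∃ M : ℝ, ∀ ω, |ε ω| ≤ M)
    (A R : ℝ → ℝ)
    (hA : LipschitzWith 1 A) (hAmono : Monotone A)
    (hR : LipschitzWith 1 R) (hRmono : Monotone R)
    (U : ℝ → ℝ)
    (hU : ∀ θ, U θ = δ * ∫ ω, max (α * θ + ε ω - p + A (α * θ + ε ω))
      (R (α * θ + ε ω)) ∂ℙ) :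
    ∀ θ ∈ Set.Icc a b, ∀ θ' ∈ Set.Icc a b, θ < θ' →
      0 ≤ U θ' - U θ ∧ U θ' - U θ ≤ 2 * δ * α * (θ' - θ) ∧
        2 * δ * α * (θ' - θ) < θ' - θ := by
  obtain ⟨M, hM⟩ := hεbdd
  obtain ⟨hδ0, hδ1⟩ := hδ
  set g : ℝ → ℝ := fun x => max (x - p + A x) (R x) with hg
  -- g is monotone
  have gmono : Monotone g := by
    intro x y hxy
    exact max_le_max (by have := hAmono hxy; linarith) (hRmono hxy)
  -- g is 2-Lipschitz (one-sided suffices with monotonicity)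
  have glip : ∀ x y : ℝ, x ≤ y → g y - g x ≤ 2 * (y - x) := by
    intro x y hxy
    have hA' : A y - A x ≤ y - x := by
      have := hA.dist_le_mul y x
      simp [Real.dist_eq, abs_of_nonneg (sub_nonneg.mpr hxy)] at this
      have := le_trans (le_abs_self _) this
      linarith
    have hR' : R y - R x ≤ y - x := by
      have := hR.dist_le_mul y x
      simp [Real.dist_eq, abs_of_nonneg (sub_nonneg.mpr hxy)] at this
      have := le_trans (le_abs_self _) this
      linarith
    have h1 : y - p + A y ≤ (x - p + A x) + 2 * (y - x) := by linarith
    have h2 : R y ≤ R x + 2 * (y - x) := by linarith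
    have : g y ≤ g x + 2 * (y - x) := by
      apply max_le
      · exact le_trans h1 (by gcongr; exact le_max_left _ _)
      · exact le_trans h2 (by gcongr; exact le_max_right _ _)
    linarith
  have gcont : Continuous g := by
    have hA2 : LipschitzWith 2 g := by
      have lid : LipschitzWith 1 (fun x : ℝ => x - p) := by
        apply LipschitzWith.of_dist_le_mul
        intro x y
        simp [Real.dist_eq]
      have l1 : LipschitzWith 2 (fun x : ℝ => x - p + A x) := by
        have : LipschitzWith (1 + 1) (fun x : ℝ => (x - p) + A x) :=
          LipschitzWith.add lid hA
        simpa [one_add_one_eq_two] using this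
      have l2 : LipschitzWith 2 R := hR.weaken (by norm_num)
      simpa using l1.max l2
    exact hA2.continuous
  -- integrability of ω ↦ g (α θ + ε ω) for any θ
  have hint : ∀ θ : ℝ, Integrable (fun ω => g (α * θ + ε ω)) ℙ := by
    intro θ
    have hmeas : Measurable (fun ω => g (α * θ + ε ω)) :=
      gcont.measurable.comp ((measurable_const.add hεmeas))
    refine Integrable.mono' (integrable_const (|g (α * θ)| + 2 * M))
      hmeas.aestronglyMeasurable ?_
    filter_upwards with ω
    have hd : |g (α * θ + ε ω) - g (α * θ)| ≤ 2 * |ε ω| := by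
      rcases le_total (α * θ) (α * θ + ε ω) with h | h
      · have h1 := glip _ _ h
        have h2 : 0 ≤ g (α * θ + ε ω) - g (α * θ) := by linarith [gmono h]
        rw [abs_of_nonneg h2]
        calc g (α * θ + ε ω) - g (α * θ) ≤ 2 * (α * θ + ε ω - α * θ) := h1
          _ = 2 * ε ω := by ring_nf
          _ ≤ 2 * |ε ω| := by linarith [le_abs_self (ε ω)]
      · have h1 := glip _ _ h
        have h2 : g (α * θ + ε ω) - g (α * θ) ≤ 0 := by linarith [gmono h]
        rw [abs_of_nonpos h2]
        calc -(g (α * θ + ε ω) - g (α * θ)) ≤ 2 * (α * θ - (α * θ + ε ω)) := by linarith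
          _ = 2 * (-ε ω) := by ring_nf
          _ ≤ 2 * |ε ω| := by linarith [neg_le_abs (ε ω)]
    calc |g (α * θ + ε ω)| ≤ |g (α * θ)| + |g (α * θ + ε ω) - g (α * θ)| := by
          have := abs_add_le (g (α * θ)) (g (α * θ + ε ω) - g (α * θ))
          simpa using this
      _ ≤ |g (α * θ)| + 2 * |ε ω| := by linarith
      _ ≤ |g (α * θ)| + 2 * M := by linarith [hM ω]
  intro θ hθ θ' hθ' hlt
  have h2δα : 2 * δ * α < 1 := by
    rw [lt_div_iff₀ (by positivity)] at hα'
    linarith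
  have key : U θ' - U θ = δ * ∫ ω, (g (α * θ' + ε ω) - g (α * θ + ε ω)) ∂ℙ := by
    rw [hU θ', hU θ, integral_sub (hint θ') (hint θ)]
    ring
  have hmono' : ∀ ω, 0 ≤ g (α * θ' + ε ω) - g (α * θ + ε ω) := by
    intro ω
    have : α * θ + ε ω ≤ α * θ' + ε ω := by nlinarith
    linarith [gmono this]
  have hub : ∀ ω, g (α * θ' + ε ω) - g (α * θ + ε ω) ≤ 2 * α * (θ' - θ) := by
    intro ω
    have hle : α * θ + ε ω ≤ α * θ' + ε ω := by nlinarith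
    have := glip _ _ hle
    calc g (α * θ' + ε ω) - g (α * θ + ε ω) ≤ 2 * (α * θ' + ε ω - (α * θ + ε ω)) := this
      _ = 2 * α * (θ' - θ) := by ring
  refine ⟨?_, ?_, ?_⟩
  · rw [key]
    have : 0 ≤ ∫ ω, (g (α * θ' + ε ω) - g (α * θ + ε ω)) ∂ℙ :=
      integral_nonneg fun ω => hmono' ω
    positivity
  · rw [key]
    have hI : (∫ ω, (g (α * θ' + ε ω) - g (α * θ + ε ω)) ∂ℙ) ≤ 2 * α * (θ' - θ) := by
      calc (∫ ω, (g (α * θ' + ε ω) - g (α * θ + ε ω)) ∂ℙ)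
          ≤ ∫ _ω, 2 * α * (θ' - θ) ∂ℙ :=
            integral_mono ((hint θ').sub (hint θ)) (integrable_const _) fun ω => hub ω
        _ = 2 * α * (θ' - θ) := by simp
    calc δ * ∫ ω, (g (α * θ' + ε ω) - g (α * θ + ε ω)) ∂ℙ
        ≤ δ * (2 * α * (θ' - θ)) := by
          exact mul_le_mul_of_nonneg_left hI (le_of_lt hδ0)
      _ = 2 * δ * α * (θ' - θ) := by ring
  · nlinarith
end
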